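/- arXiv:1305.5092 — 2 statements merged into one kernel-verified Lean document; each statement's English description precedes it below -/
import Mathlib

section
/- Let A = A_1 ⊔ A_2 ⊔ A_3 be a (3,3)-net in P^2(C). If two of the three classes each consist of three concurrent lines, then so does the third class. Equivalently, no (3,3)-net has exactly 11 triple points. -/
open scoped Classical

noncomputable section

/-- The complex projective plane `P²(ℂ)`. -/
abbrev ProjPlane : Type := Projectivization ℂ (Fin 3 → ℂ)

/-- A subset of `P²(ℂ)` is a projective line if it is the zero locus of a nonzero
linear form. -/
def IsProjLine (S : Set ProjPlane) : Prop :=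
  ∃ f : (Fin 3 → ℂ) →ₗ[ℂ] ℂ, f ≠ 0 ∧ S = {p : ProjPlane | f p.rep = 0}

/-- The lines of the arrangement `A` passing through the point `p`. -/
def linesThrough (A : Finset (Set ProjPlane)) (p : ProjPlane) : Finset (Set ProjPlane) :=
  A.filter fun L => p ∈ L

/-- The multiplicity of a point `p` with respect to the arrangement `A`. -/
def mult (A : Finset (Set ProjPlane)) (p : ProjPlane) : ℕ :=
  (linesThrough A p).card

/-- `p` is a multiple point of the arrangement `A` (at least two lines pass through it). -/
def IsMultPoint (A : Finset (Set ProjPlane)) (p : ProjPlane) : Prop :=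
  2 ≤ mult A p

/-- A `q`-cocycle of the line arrangement `A`: for every multiple point `p`,
if `q` divides the multiplicity then the values of `η` on the lines through `p` sum to `0`,
and otherwise `η` is constant on the lines through `p`. -/
def IsCocycle (q : ℕ) (A : Finset (Set ProjPlane)) (η : Set ProjPlane → ZMod q) : Prop :=
  ∀ p : ProjPlane, IsMultPoint A p →
    ((q ∣ mult A p → ∑ L ∈ linesThrough A p, η L = 0) ∧
     (¬ q ∣ mult A p → ∀ L ∈ linesThrough A p, ∀ K ∈ linesThrough A p, η L = η K))

/-- A function on lines is non-constant on the arrangement `A`. -/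
def NonConstant {α : Type*} (A : Finset (Set ProjPlane)) (η : Set ProjPlane → α) : Prop :=
  ∃ L ∈ A, ∃ K ∈ A, η L ≠ η K

/-- A `(k,q)`-net structure on the line arrangement `A`, with classes `C 0, …, C (k-1)`:
the classes partition `A` into `k` classes of `q` lines each, and whenever two lines from
different classes meet, their intersection point lies on exactly one line of each class. -/
def IsNet (k q : ℕ) (A : Finset (Set ProjPlane)) (C : Fin k → Finset (Set ProjPlane)) : Prop :=
  (∀ L ∈ A, IsProjLine L) ∧
  A.card = k * q ∧
  (∀ i, (C i).card = q) ∧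
  (∀ i j, i ≠ j → Disjoint (C i) (C j)) ∧
  (∀ i, C i ⊆ A) ∧
  (∀ L ∈ A, ∃ i, L ∈ C i) ∧
  (∀ i j, i ≠ j → ∀ L ∈ C i, ∀ K ∈ C j, ∀ p : ProjPlane, p ∈ L → p ∈ K →
    ∀ m : Fin k, ∃! N, N ∈ C m ∧ p ∈ N)

/-- Lattice isomorphism of two line arrangements: a bijection between the lines such that
a subfamily of lines has a common point iff the image subfamily has a common point. -/
def LatticeIso (A B : Finset (Set ProjPlane)) : Prop :=
  ∃ φ : Set ProjPlane → Set ProjPlane, Set.BijOn φ ↑A ↑B ∧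
    ∀ S : Finset (Set ProjPlane), S ⊆ A →
      ((∃ p : ProjPlane, ∀ L ∈ S, p ∈ L) ↔ ∃ p : ProjPlane, ∀ L ∈ S, p ∈ φ L)

/-- The projective line with homogeneous equation `a·x + b·y + c·z = 0`. -/
def lineOf (a b c : ℂ) : Set ProjPlane :=
  {p : ProjPlane | a * p.rep 0 + b * p.rep 1 + c * p.rep 2 = 0}

/-!
Let `P` and `Q` be the vertices of the two concurrent classes. In an affine chart with `P` and
`Q` at infinity, the lines of their classes are the horizontal lines `y = α L` and the vertical
lines `x = β M`. A line `N` of the third class meets each horizontal line `L` at a point of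
exactly one vertical line `σ L`, and `σ` is a bijection, so the points of the net on `N` are the
`q` points `(β (σ L), α L)`. Their centroid `(∑ β / q, ∑ α / q)` lies on `N` and does not depend
on `N`.

The triple points of a `(3,3)`-net are its `9` mixed triple points and the vertices of its
concurrent classes, so `11` triple points would mean exactly two concurrent classes.
-/

theorem exists_notMem_span_pair {K V : Type*} [Field K] [AddCommGroup V] [Module K V]
    [FiniteDimensional K V] (hV : 2 < Module.finrank K V) (u v : V) :
    ∃ r, r ∉ Submodule.span K {u, v} := by
  by_contra! h
  have hle := finrank_span_finset_le_card (R := K) ({u, v} : Finset V)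
  rw [Set.finrank, Finset.coe_pair, Submodule.eq_top_iff'.2 h, finrank_top] at hle
  have := Finset.card_le_two (a := u) (b := v)
  omega

theorem smul_add_smul_add_ne_zero {K V : Type*} [Field K] [AddCommGroup V] [Module K V]
    {u v r : V} (hr : r ∉ Submodule.span K {u, v}) (x y : K) : x • u + y • v + r ≠ 0 := by
  intro h
  apply hr
  rw [eq_neg_of_add_eq_zero_right h]
  exact neg_mem (add_mem (Submodule.smul_mem _ _ (Submodule.subset_span (by simp)))
    (Submodule.smul_mem _ _ (Submodule.subset_span (by simp))))

theorem mk_mem_setOf_rep_iff {f : (Fin 3 → ℂ) →ₗ[ℂ] ℂ} {v : Fin 3 → ℂ} (hv : v ≠ 0) :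
    Projectivization.mk ℂ v hv ∈ {p : ProjPlane | f p.rep = 0} ↔ f v = 0 := by
  obtain ⟨a, ha⟩ := Projectivization.exists_smul_eq_mk_rep ℂ v hv
  simp [← ha, Units.smul_def]

theorem setOf_rep_eq_projectivization_ker (f : (Fin 3 → ℂ) →ₗ[ℂ] ℂ) :
    {p : ProjPlane | f p.rep = 0} = (LinearMap.ker f).projectivization := by
  ext p
  induction p using Projectivization.ind with
  | h v hv => exact (mk_mem_setOf_rep_iff hv).trans LinearMap.mem_ker.symm

namespace IsProjLine

variable {L K : Set ProjPlane}

theorem exists_mem_inter (hL : IsProjLine L) (hK : IsProjLine K) : ∃ p, p ∈ L ∧ p ∈ K := by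
  obtain ⟨f, -, rfl⟩ := hL
  obtain ⟨g, -, rfl⟩ := hK
  obtain ⟨v, hv, hv0⟩ := Submodule.exists_mem_ne_zero_of_ne_bot
    (LinearMap.ker_ne_bot_of_finrank_lt (f := f.prod g) (by simp))
  rw [LinearMap.ker_prod, Submodule.mem_inf] at hv
  exact ⟨_, (mk_mem_setOf_rep_iff hv0).2 hv.1, (mk_mem_setOf_rep_iff hv0).2 hv.2⟩

theorem eq_of_mem_of_mem (hL : IsProjLine L) (hK : IsProjLine K) (hLK : L ≠ K)
    {p p' : ProjPlane} (hpL : p ∈ L) (hpK : p ∈ K) (hp'L : p' ∈ L) (hp'K : p' ∈ K) : p = p' := by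
  by_contra hp
  obtain ⟨f, hf, rfl⟩ := hL
  obtain ⟨g, hg, rfl⟩ := hK
  have finrank_ker (h : (Fin 3 → ℂ) →ₗ[ℂ] ℂ) (hh : h ≠ 0) :
      Module.finrank ℂ (LinearMap.ker h) = 2 := by
    have := Module.Dual.finrank_ker_add_one_of_ne_zero hh
    rw [Module.finrank_fin_fun] at this
    omega
  simp only [setOf_rep_eq_projectivization_ker] at hpL hpK hp'L hp'K hLK
  exact hLK (by rw [Projectivization.line_unique hp _ _ (finrank_ker f hf) (finrank_ker g hg)
    hpL hp'L hpK hp'K])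

end IsProjLine

theorem finite_setOf_isMultPoint {A : Finset (Set ProjPlane)} (hA : ∀ L ∈ A, IsProjLine L) :
    {p | IsMultPoint A p}.Finite := by
  refine (A.finite_toSet.biUnion fun L hL => A.finite_toSet.biUnion fun K hK =>
    (?_ : {p | L ≠ K ∧ p ∈ L ∧ p ∈ K}.Subsingleton).finite).subset fun p hp => ?_
  · rintro p ⟨hLK, hpL, hpK⟩ p' ⟨-, hp'L, hp'K⟩
    exact (hA L hL).eq_of_mem_of_mem (hA K hK) hLK hpL hpK hp'L hp'K
  · obtain ⟨L, hL, K, hK, hLK⟩ := Finset.one_lt_card.1 (show 1 < mult A p from hp)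
    simp only [linesThrough, Finset.mem_filter] at hL hK
    exact Set.mem_biUnion hL.1 (Set.mem_biUnion hK.1 ⟨hLK, hL.2, hK.2⟩)

section AffineChart

variable {u v r : Fin 3 → ℂ}

def chartPoint (hr : r ∉ Submodule.span ℂ {u, v}) (x y : ℂ) : ProjPlane :=
  Projectivization.mk ℂ (x • u + y • v + r) (smul_add_smul_add_ne_zero hr x y)

variable (hr : r ∉ Submodule.span ℂ {u, v})

theorem chartPoint_mem_setOf_iff (f : (Fin 3 → ℂ) →ₗ[ℂ] ℂ) (x y : ℂ) :
    chartPoint hr x y ∈ {p : ProjPlane | f p.rep = 0} ↔ x * f u + y * f v + f r = 0 := by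
  rw [chartPoint, mk_mem_setOf_rep_iff]
  simp

theorem IsProjLine.chartPoint_centroid_mem {N : Set ProjPlane} (hN : IsProjLine N) {ι : Type*}
    {s : Finset ι} (hs : s.Nonempty) {x y : ι → ℂ}
    (h : ∀ i ∈ s, chartPoint hr (x i) (y i) ∈ N) :
    chartPoint hr ((∑ i ∈ s, x i) / s.card) ((∑ i ∈ s, y i) / s.card) ∈ N := by
  obtain ⟨f, -, rfl⟩ := hN
  simp only [chartPoint_mem_setOf_iff] at h ⊢
  have hsum := Finset.sum_eq_zero h
  rw [Finset.sum_add_distrib, Finset.sum_add_distrib, ← Finset.sum_mul, ← Finset.sum_mul,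
    Finset.sum_const, nsmul_eq_mul] at hsum
  have hcard : (s.card : ℂ) ≠ 0 := by exact_mod_cast hs.card_pos.ne'
  field_simp
  linear_combination hsum

end AffineChart

section LinesThroughChartAxes

variable {P Q : ProjPlane} {r : Fin 3 → ℂ} (hr : r ∉ Submodule.span ℂ {P.rep, Q.rep})
  {L : Set ProjPlane}

theorem IsProjLine.exists_chartPoint_mem_iff_snd_eq (hL : IsProjLine L) (hP : P ∈ L)
    (hQ : Q ∉ L) : ∃ α, ∀ x y, chartPoint hr x y ∈ L ↔ y = α := by
  obtain ⟨f, -, rfl⟩ := hL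
  refine ⟨-f r / f Q.rep, fun x y => ?_⟩
  rw [chartPoint_mem_setOf_iff, show f P.rep = 0 from hP, eq_div_iff hQ]
  constructor <;> intro h <;> linear_combination h

theorem IsProjLine.exists_chartPoint_mem_iff_fst_eq (hL : IsProjLine L) (hQ : Q ∈ L)
    (hP : P ∉ L) : ∃ β, ∀ x y, chartPoint hr x y ∈ L ↔ x = β := by
  obtain ⟨f, -, rfl⟩ := hL
  refine ⟨-f r / f P.rep, fun x y => ?_⟩
  rw [chartPoint_mem_setOf_iff, show f Q.rep = 0 from hQ, eq_div_iff hP]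
  constructor <;> intro h <;> linear_combination h

end LinesThroughChartAxes

def Concurrent (S : Finset (Set ProjPlane)) : Prop :=
  ∃ p : ProjPlane, ∀ L ∈ S, p ∈ L

namespace IsNet

section

variable {k q : ℕ} {A : Finset (Set ProjPlane)} {C : Fin k → Finset (Set ProjPlane)}
  (hA : IsNet k q A C)
include hA

theorem isProjLine {i : Fin k} {L : Set ProjPlane} (hL : L ∈ C i) : IsProjLine L :=
  hA.1 L (hA.2.2.2.2.1 i hL)

theorem card_eq (i : Fin k) : (C i).card = q :=
  hA.2.2.1 i

theorem ne_of_mem {i j : Fin k} (hij : i ≠ j) {L K : Set ProjPlane} (hL : L ∈ C i)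
    (hK : K ∈ C j) : L ≠ K := by
  rintro rfl
  exact Finset.disjoint_left.1 (hA.2.2.2.1 i j hij) hL hK

theorem mem_of_mem_class {i : Fin k} {L : Set ProjPlane} (hL : L ∈ C i) : L ∈ A :=
  hA.2.2.2.2.1 i hL

theorem exists_mem_class {L : Set ProjPlane} (hL : L ∈ A) : ∃ i, L ∈ C i :=
  hA.2.2.2.2.2.1 L hL

theorem existsUnique_mem {i j : Fin k} (hij : i ≠ j) {L K : Set ProjPlane} (hL : L ∈ C i)
    (hK : K ∈ C j) {p : ProjPlane} (hpL : p ∈ L) (hpK : p ∈ K) (m : Fin k) :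
    ∃! N, N ∈ C m ∧ p ∈ N :=
  hA.2.2.2.2.2.2 i j hij L hL K hK p hpL hpK m

theorem eq_of_mem {i j : Fin k} (hij : i ≠ j) {L K : Set ProjPlane} (hL : L ∈ C i)
    (hK : K ∈ C j) {p : ProjPlane} (hpL : p ∈ L) (hpK : p ∈ K) {m : Fin k} {N N' : Set ProjPlane}
    (hN : N ∈ C m) (hN' : N' ∈ C m) (hpN : p ∈ N) (hpN' : p ∈ N') : N = N' :=
  (hA.existsUnique_mem hij hL hK hpL hpK m).unique ⟨hN, hpN⟩ ⟨hN', hpN'⟩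

theorem exists_ne (hq : 1 < q) (i : Fin k) : ∃ L ∈ C i, ∃ L' ∈ C i, L ≠ L' :=
  Finset.one_lt_card.1 (by rwa [hA.card_eq i])

theorem mem_of_forall_mem (hq : 1 < q) {i : Fin k} {p : ProjPlane} (hp : ∀ L ∈ C i, p ∈ L)
    {K : Set ProjPlane} (hK : K ∈ A) (hpK : p ∈ K) : K ∈ C i := by
  obtain ⟨L, hL, L', hL', hLL'⟩ := hA.exists_ne hq i
  obtain ⟨j, hj⟩ := hA.exists_mem_class hK
  by_contra hKi
  have hji : j ≠ i := by rintro rfl; exact hKi hj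
  exact hLL' (hA.eq_of_mem hji hj hL hpK (hp L hL) hL hL' (hp L hL) (hp L' hL'))

theorem notMem_of_forall_mem (hq : 1 < q) {i j : Fin k} (hij : i ≠ j) {p : ProjPlane}
    (hp : ∀ L ∈ C i, p ∈ L) {K : Set ProjPlane} (hK : K ∈ C j) : p ∉ K := fun hpK =>
  hA.ne_of_mem hij (hA.mem_of_forall_mem hq hp (hA.mem_of_mem_class hK) hpK) hK rfl

theorem eq_of_forall_mem (hq : 1 < q) {i : Fin k} {p p' : ProjPlane} (hp : ∀ L ∈ C i, p ∈ L)
    (hp' : ∀ L ∈ C i, p' ∈ L) : p = p' := by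
  obtain ⟨L, hL, L', hL', hLL'⟩ := hA.exists_ne hq i
  exact (hA.isProjLine hL).eq_of_mem_of_mem (hA.isProjLine hL') hLL' (hp L hL) (hp L' hL')
    (hp' L hL) (hp' L' hL')

theorem existsUnique_mem_of_mem_inter {a c : Fin k} (hac : a ≠ c) {L N : Set ProjPlane}
    (hL : L ∈ C a) (hN : N ∈ C c) (b : Fin k) :
    ∃! M, M ∈ C b ∧ ∃ s, s ∈ L ∧ s ∈ M ∧ s ∈ N := by
  obtain ⟨s, hsL, hsN⟩ := (hA.isProjLine hL).exists_mem_inter (hA.isProjLine hN)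
  obtain ⟨M, ⟨hM, hsM⟩, -⟩ := hA.existsUnique_mem hac hL hN hsL hsN b
  refine ⟨M, ⟨hM, s, hsL, hsM, hsN⟩, fun M' ⟨hM', s', hs'L, hs'M', hs'N⟩ => ?_⟩
  have hss' : s = s' := (hA.isProjLine hL).eq_of_mem_of_mem (hA.isProjLine hN)
    (hA.ne_of_mem hac hL hN) hsL hsN hs'L hs'N
  subst hss'
  exact hA.eq_of_mem hac hL hN hsL hsN hM' hM hs'M' hsM

theorem concurrent_of_concurrent (hq : 1 < q) {a b c : Fin k} (hab : a ≠ b) (hac : a ≠ c)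
    (hbc : b ≠ c) (ha : Concurrent (C a)) (hb : Concurrent (C b)) : Concurrent (C c) := by
  obtain ⟨P, hP⟩ := ha
  obtain ⟨Q, hQ⟩ := hb
  obtain ⟨r, hr⟩ :=
    exists_notMem_span_pair (by rw [Module.finrank_fin_fun]; norm_num) P.rep Q.rep
  choose! α hα using fun L (hL : L ∈ C a) =>
    (hA.isProjLine hL).exists_chartPoint_mem_iff_snd_eq hr (hP L hL)
      (hA.notMem_of_forall_mem hq hab.symm hQ hL)
  choose! β hβ using fun M (hM : M ∈ C b) =>
    (hA.isProjLine hM).exists_chartPoint_mem_iff_fst_eq hr (hQ M hM)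
      (hA.notMem_of_forall_mem hq hab hP hM)
  refine ⟨chartPoint hr ((∑ M ∈ C b, β M) / q) ((∑ L ∈ C a, α L) / q), fun N hN => ?_⟩
  have mem_of_meet : ∀ L ∈ C a, ∀ M ∈ C b, (∃ s, s ∈ L ∧ s ∈ M ∧ s ∈ N) →
      chartPoint hr (β M) (α L) ∈ N := by
    rintro L hL M hM ⟨s, hsL, hsM, hsN⟩
    rwa [← (hA.isProjLine hL).eq_of_mem_of_mem (hA.isProjLine hM) (hA.ne_of_mem hab hL hM)
      hsL hsM ((hα L hL _ _).2 rfl) ((hβ M hM _ _).2 rfl)]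
  choose! σ hσ using fun L (hL : L ∈ C a) =>
    (hA.existsUnique_mem_of_mem_inter hac hL hN b).exists
  have hσ_inj : Set.InjOn σ (C a) := by
    intro L hL L' hL' hLL'
    obtain ⟨hσL, s, hsL, hsM, hsN⟩ := hσ L hL
    obtain ⟨-, s', hs'L, hs'M, hs'N⟩ := hσ L' hL'
    rw [← hLL'] at hs'M
    exact (hA.existsUnique_mem_of_mem_inter hbc hσL hN a).unique ⟨hL, s, hsM, hsL, hsN⟩
      ⟨hL', s', hs'M, hs'L, hs'N⟩
  have hσ_sum : ∑ L ∈ C a, β (σ L) = ∑ M ∈ C b, β M :=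
    Finset.sum_nbij σ (fun L hL => (hσ L hL).1) hσ_inj
      (Finset.surjOn_of_injOn_of_card_le σ (fun L hL => (hσ L hL).1) hσ_inj
        (by rw [hA.card_eq, hA.card_eq])) fun _ _ => rfl
  have hcentroid := (hA.isProjLine hN).chartPoint_centroid_mem hr
    (Finset.card_pos.1 (by rw [hA.card_eq]; omega))
    (fun L hL => mem_of_meet L hL (σ L) (hσ L hL).1 (hσ L hL).2)
  rwa [hσ_sum, hA.card_eq] at hcentroid

theorem forall_concurrent (hq : 1 < q) {a b : Fin k} (hab : a ≠ b) (ha : Concurrent (C a))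
    (hb : Concurrent (C b)) (c : Fin k) : Concurrent (C c) := by
  rcases eq_or_ne a c with rfl | hac
  · exact ha
  rcases eq_or_ne b c with rfl | hbc
  · exact hb
  exact hA.concurrent_of_concurrent hq hab hac hbc ha hb

theorem mult_eq_of_mem_of_mem {i j : Fin k} (hij : i ≠ j) {L M : Set ProjPlane} (hL : L ∈ C i)
    (hM : M ∈ C j) {p : ProjPlane} (hpL : p ∈ L) (hpM : p ∈ M) : mult A p = k := by
  choose N hN using fun m => (hA.existsUnique_mem hij hL hM hpL hpM m).exists
  rw [mult, ← Finset.card_fin k]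
  refine (Finset.card_bij (fun m _ => N m) (fun m _ => ?_) (fun m _ m' _ hmm' => ?_)
    fun K hK => ?_).symm
  · exact Finset.mem_filter.2 ⟨hA.mem_of_mem_class (hN m).1, (hN m).2⟩
  · by_contra hne
    exact hA.ne_of_mem hne (hN m).1 (hN m').1 hmm'
  · obtain ⟨hKA, hpK⟩ := Finset.mem_filter.1 hK
    obtain ⟨m, hm⟩ := hA.exists_mem_class hKA
    exact ⟨m, Finset.mem_univ m, hA.eq_of_mem hij hL hM hpL hpM (hN m).1 hm (hN m).2 hpK⟩

theorem linesThrough_eq_of_forall_mem (hq : 1 < q) {i : Fin k} {p : ProjPlane}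
    (hp : ∀ L ∈ C i, p ∈ L) : linesThrough A p = C i := by
  ext K
  simp only [linesThrough, Finset.mem_filter]
  exact ⟨fun ⟨hK, hpK⟩ => hA.mem_of_forall_mem hq hp hK hpK,
    fun hK => ⟨hA.mem_of_mem_class hK, hp K hK⟩⟩

theorem ncard_setOf_mem_mem {i j : Fin k} (hij : i ≠ j) :
    {p | ∃ L ∈ C i, ∃ M ∈ C j, p ∈ L ∧ p ∈ M}.ncard = q * q := by
  rw [show q * q = (C i).card * (C j).card by rw [hA.card_eq, hA.card_eq],
    ← Finset.card_product, ← Set.ncard_coe_finset]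
  have hmeet : ∀ x ∈ ((C i ×ˢ C j : Finset _) : Set (Set ProjPlane × Set ProjPlane)),
      ∃ p, p ∈ x.1 ∧ p ∈ x.2 := fun x hx =>
    (hA.isProjLine (Finset.mem_product.1 hx).1).exists_mem_inter
      (hA.isProjLine (Finset.mem_product.1 hx).2)
  symm
  refine Set.ncard_congr (fun x hx => (hmeet x hx).choose) (fun x hx => ?_)
    (fun x x' hx hx' hxx' => ?_) fun p ⟨L, hL, M, hM, hpL, hpM⟩ => ?_
  · exact ⟨x.1, (Finset.mem_product.1 hx).1, x.2, (Finset.mem_product.1 hx).2,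
      (hmeet x hx).choose_spec⟩
  · obtain ⟨hx1, hx2⟩ := Finset.mem_product.1 hx
    obtain ⟨hx'1, hx'2⟩ := Finset.mem_product.1 hx'
    obtain ⟨hp1, hp2⟩ := (hmeet x hx).choose_spec
    obtain ⟨hp'1, hp'2⟩ := (hmeet x' hx').choose_spec
    rw [← hxx'] at hp'1 hp'2
    exact Prod.ext (hA.eq_of_mem hij hx1 hx2 hp1 hp2 hx1 hx'1 hp1 hp'1)
      (hA.eq_of_mem hij hx1 hx2 hp1 hp2 hx2 hx'2 hp2 hp'2)
  · have hx : (L, M) ∈ ((C i ×ˢ C j : Finset _) : Set _) := Finset.mem_product.2 ⟨hL, hM⟩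
    obtain ⟨hp1, hp2⟩ := (hmeet _ hx).choose_spec
    exact ⟨(L, M), hx, (hA.isProjLine hL).eq_of_mem_of_mem (hA.isProjLine hM)
      (hA.ne_of_mem hij hL hM) hp1 hp2 hpL hpM⟩

theorem ncard_setOf_forall_mem (hq : 1 < q) :
    {p | ∃ i, ∀ L ∈ C i, p ∈ L}.ncard = {i | Concurrent (C i)}.ncard := by
  symm
  refine Set.ncard_congr (t := {p | ∃ i, ∀ L ∈ C i, p ∈ L})
    (fun i (hi : Concurrent (C i)) => Exists.choose hi) (fun i hi => ⟨i, hi.choose_spec⟩)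
    (fun i j hi hj hij => ?_) fun p ⟨i, hp⟩ => ⟨i, ⟨p, hp⟩, hA.eq_of_forall_mem hq ?_ hp⟩
  · by_contra hne
    obtain ⟨L, hL, -⟩ := hA.exists_ne hq j
    exact hA.notMem_of_forall_mem hq hne hi.choose_spec hL (hij ▸ hj.choose_spec L hL)
  · exact Exists.choose_spec (p := fun p => ∀ L ∈ C i, p ∈ L) ⟨p, hp⟩

theorem disjoint_setOf_mem_mem_setOf_forall_mem (hq : 1 < q) {i j : Fin k} (hij : i ≠ j) :
    Disjoint {p | ∃ L ∈ C i, ∃ M ∈ C j, p ∈ L ∧ p ∈ M} {p | ∃ m, ∀ L ∈ C m, p ∈ L} := by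
  refine Set.disjoint_left.2 fun p ⟨L, hL, M, hM, hpL, hpM⟩ ⟨m, hp⟩ => ?_
  rcases eq_or_ne m i with rfl | hmi
  · exact hA.notMem_of_forall_mem hq hij hp hM hpM
  · exact hA.notMem_of_forall_mem hq hmi hp hL hpL

end

variable {A : Finset (Set ProjPlane)} {C : Fin 3 → Finset (Set ProjPlane)}

theorem setOf_mult_eq_three (hA : IsNet 3 3 A C) :
    {p | mult A p = 3} =
      {p | ∃ L ∈ C 0, ∃ M ∈ C 1, p ∈ L ∧ p ∈ M} ∪ {p | ∃ i, ∀ L ∈ C i, p ∈ L} := by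
  ext p
  refine ⟨fun (hp : mult A p = 3) => ?_, ?_⟩
  · obtain ⟨K, hK⟩ := Finset.card_pos.1 (show 0 < (linesThrough A p).card by
      rw [← mult, hp]; norm_num)
    obtain ⟨hKA, hpK⟩ := Finset.mem_filter.1 hK
    obtain ⟨i, hKi⟩ := hA.exists_mem_class hKA
    by_cases hsub : linesThrough A p ⊆ C i
    · have heq := Finset.eq_of_subset_of_card_le hsub (by rw [hA.card_eq, ← mult, hp])
      refine Or.inr ⟨i, fun L hL => ?_⟩
      rw [← heq] at hL
      exact (Finset.mem_filter.1 hL).2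
    · obtain ⟨K', hK', hK'i⟩ := Finset.not_subset.1 hsub
      obtain ⟨hK'A, hpK'⟩ := Finset.mem_filter.1 hK'
      obtain ⟨j, hK'j⟩ := hA.exists_mem_class hK'A
      have hij : i ≠ j := by rintro rfl; exact hK'i hK'j
      obtain ⟨L, ⟨hL, hpL⟩, -⟩ := hA.existsUnique_mem hij hKi hK'j hpK hpK' 0
      obtain ⟨M, ⟨hM, hpM⟩, -⟩ := hA.existsUnique_mem hij hKi hK'j hpK hpK' 1
      exact Or.inl ⟨L, hL, M, hM, hpL, hpM⟩
  · rintro (⟨L, hL, M, hM, hpL, hpM⟩ | ⟨i, hp⟩)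
    · exact hA.mult_eq_of_mem_of_mem (by decide) hL hM hpL hpM
    · show mult A p = 3
      rw [mult, hA.linesThrough_eq_of_forall_mem (by norm_num) hp, hA.card_eq]

theorem ncard_setOf_mult_eq_three (hA : IsNet 3 3 A C) :
    {p | mult A p = 3}.ncard = 9 + {i | Concurrent (C i)}.ncard := by
  have hfin : {p | mult A p = 3}.Finite :=
    (finite_setOf_isMultPoint hA.1).subset fun p (hp : mult A p = 3) =>
      show 2 ≤ mult A p by omega
  rw [hA.setOf_mult_eq_three] at hfin ⊢
  rw [Set.ncard_union_eq (hA.disjoint_setOf_mem_mem_setOf_forall_mem (by norm_num) (by decide))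
    (hfin.subset Set.subset_union_left) (hfin.subset Set.subset_union_right),
    hA.ncard_setOf_mem_mem (by decide), hA.ncard_setOf_forall_mem (by norm_num)]

end IsNet

/-- In a (3,3)-net, if two of the classes each consist of three concurrent
lines, then so does the third; equivalently, no (3,3)-net has exactly 11 triple points. -/
theorem statement5 (A : Finset (Set ProjPlane)) (C : Fin 3 → Finset (Set ProjPlane))
    (hA : IsNet 3 3 A C) :
    (∀ i j : Fin 3, i ≠ j →
      (∃ p : ProjPlane, ∀ L ∈ C i, p ∈ L) → (∃ p : ProjPlane, ∀ L ∈ C j, p ∈ L) →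
        ∀ k : Fin 3, ∃ p : ProjPlane, ∀ L ∈ C k, p ∈ L) ∧
    {p : ProjPlane | mult A p = 3}.ncard ≠ 11 := by
  have hconc : ∀ i j : Fin 3, i ≠ j → Concurrent (C i) → Concurrent (C j) →
      ∀ k, Concurrent (C k) :=
    fun i j hij hi hj => hA.forall_concurrent (by norm_num) hij hi hj
  refine ⟨hconc, fun h11 => ?_⟩
  rw [hA.ncard_setOf_mult_eq_three] at h11
  obtain ⟨i, j, hij, hS⟩ := Set.ncard_eq_two.1 (show {i | Concurrent (C i)}.ncard = 2 by omega)
  have hi : Concurrent (C i) := show i ∈ {i | Concurrent (C i)} by simp [hS]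
  have hj : Concurrent (C j) := show j ∈ {i | Concurrent (C i)} by simp [hS]
  have huniv : {i | Concurrent (C i)} = Set.univ := Set.eq_univ_of_forall (hconc i j hij hi hj)
  rw [huniv, Set.ncard_univ, Nat.card_eq_fintype_card, Fintype.card_fin] at h11
  omega
end
end

section
/- There is no arrangement A of 14 distinct lines in P^2(C) admitting a partition A = L ⊔ K with |L| = 6 and |K| = 8 such that: every intersection point of a line of L with a line of K lies on exactly two lines of L and exactly two lines of K (and on no other line of A), every line of L contains exactly 4 such quadruple points, and every line of K contains exactly 3 such quadruple points. -/
open scoped Classical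

noncomputable section

namespace St14X

def dt (u v : Fin 3 → ℂ) : ℂ := u 0 * v 0 + u 1 * v 1 + u 2 * v 2
def cr (u v : Fin 3 → ℂ) : Fin 3 → ℂ := fun i => u (i+1) * v (i+2) - u (i+2) * v (i+1)
def d3 (u v w : Fin 3 → ℂ) : ℂ := dt u (cr v w)
def rowOf (f : (Fin 3 → ℂ) →ₗ[ℂ] ℂ) : Fin 3 → ℂ := fun i => f (Pi.single i 1)

lemma cr0 (r s : Fin 3 → ℂ) : cr r s 0 = r 1 * s 2 - r 2 * s 1 := rfl
lemma cr1 (r s : Fin 3 → ℂ) : cr r s 1 = r 2 * s 0 - r 0 * s 2 := rfl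
lemma cr2 (r s : Fin 3 → ℂ) : cr r s 2 = r 0 * s 1 - r 1 * s 0 := rfl

lemma funext3 {u v : Fin 3 → ℂ} (h0 : u 0 = v 0) (h1 : u 1 = v 1) (h2 : u 2 = v 2) :
    u = v := by
  funext i; fin_cases i
  · exact h0
  · exact h1
  · exact h2

lemma ne_zero_cases (w : Fin 3 → ℂ) (hw : w ≠ 0) : w 0 ≠ 0 ∨ w 1 ≠ 0 ∨ w 2 ≠ 0 := by
  by_contra h; push_neg at h
  exact hw (funext3 h.1 h.2.1 h.2.2)

lemma dt_cr_left (r s : Fin 3 → ℂ) : dt r (cr r s) = 0 := by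
  simp only [dt, cr0, cr1, cr2]; ring
lemma dt_cr_right (r s : Fin 3 → ℂ) : dt s (cr r s) = 0 := by
  simp only [dt, cr0, cr1, cr2]; ring

lemma d3_eq_zero (t x y z : Fin 3 → ℂ) (ht : t ≠ 0)
    (hx : dt t x = 0) (hy : dt t y = 0) (hz : dt t z = 0) : d3 x y z = 0 := by
  simp only [dt] at hx hy hz
  have k0 : d3 x y z * t 0 = 0 := by
    simp only [d3, dt, cr0, cr1, cr2]
    linear_combination (y 1 * z 2 - y 2 * z 1) * hx + (z 1 * x 2 - z 2 * x 1) * hy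
      + (x 1 * y 2 - x 2 * y 1) * hz
  have k1 : d3 x y z * t 1 = 0 := by
    simp only [d3, dt, cr0, cr1, cr2]
    linear_combination (y 2 * z 0 - y 0 * z 2) * hx + (z 2 * x 0 - z 0 * x 2) * hy
      + (x 2 * y 0 - x 0 * y 2) * hz
  have k2 : d3 x y z * t 2 = 0 := by
    simp only [d3, dt, cr0, cr1, cr2]
    linear_combination (y 0 * z 1 - y 1 * z 0) * hx + (z 0 * x 1 - z 1 * x 0) * hy
      + (x 0 * y 1 - x 1 * y 0) * hz
  rcases ne_zero_cases t ht with h | h | h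
  · exact (mul_eq_zero.mp k0).resolve_right h
  · exact (mul_eq_zero.mp k1).resolve_right h
  · exact (mul_eq_zero.mp k2).resolve_right h

lemma prop_of_rel (w x : Fin 3 → ℂ) (hw : w ≠ 0)
    (h01 : w 0 * x 1 = w 1 * x 0) (h02 : w 0 * x 2 = w 2 * x 0)
    (h12 : w 1 * x 2 = w 2 * x 1) : ∃ a : ℂ, x = a • w := by
  rcases ne_zero_cases w hw with hi | hi | hi
  · refine ⟨x 0 / w 0, funext3 ?_ ?_ ?_⟩ <;> simp only [Pi.smul_apply, smul_eq_mul]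
    · field_simp
    · field_simp; linear_combination h01
    · field_simp; linear_combination h02
  · refine ⟨x 1 / w 1, funext3 ?_ ?_ ?_⟩ <;> simp only [Pi.smul_apply, smul_eq_mul]
    · field_simp; linear_combination -h01
    · field_simp
    · field_simp; linear_combination h12
  · refine ⟨x 2 / w 2, funext3 ?_ ?_ ?_⟩ <;> simp only [Pi.smul_apply, smul_eq_mul]
    · field_simp; linear_combination -h02
    · field_simp; linear_combination -h12
    · field_simp

lemma rel_of_dt (r s x : Fin 3 → ℂ) (h1 : dt r x = 0) (h2 : dt s x = 0) :
    cr r s 0 * x 1 = cr r s 1 * x 0 ∧ cr r s 0 * x 2 = cr r s 2 * x 0 ∧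
      cr r s 1 * x 2 = cr r s 2 * x 1 := by
  simp only [dt] at h1 h2
  refine ⟨?_, ?_, ?_⟩ <;> simp only [cr0, cr1, cr2]
  · linear_combination s 2 * h1 - r 2 * h2
  · linear_combination (-(s 1)) * h1 + r 1 * h2
  · linear_combination s 0 * h1 - r 0 * h2

lemma d3_smul (a b c : ℂ) (x y z : Fin 3 → ℂ) :
    d3 (a • x) (b • y) (c • z) = a * b * c * d3 x y z := by
  simp only [d3, dt, cr0, cr1, cr2, Pi.smul_apply, smul_eq_mul]; ring

lemma keyIdentity (r1 r2 r3 r4 r5 r6 : Fin 3 → ℂ) :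
    d3 (cr r1 r3) (cr r2 r5) (cr r4 r6) + d3 (cr r1 r4) (cr r2 r5) (cr r3 r6)
      - d3 (cr r1 r4) (cr r2 r6) (cr r3 r5) - d3 (cr r1 r5) (cr r2 r4) (cr r3 r6)
      = 2 * d3 r1 r3 r6 * d3 r2 r4 r5 := by
  simp only [d3, dt, cr0, cr1, cr2]; ring

lemma apply_eq_dt (f : (Fin 3 → ℂ) →ₗ[ℂ] ℂ) (v : Fin 3 → ℂ) : f v = dt (rowOf f) v := by
  have hv : v = v 0 • (Pi.single 0 1 : Fin 3 → ℂ) + v 1 • (Pi.single 1 1 : Fin 3 → ℂ)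
      + v 2 • (Pi.single 2 1 : Fin 3 → ℂ) := by
    refine funext3 ?_ ?_ ?_ <;> simp
  conv_lhs => rw [hv]
  simp only [map_add, map_smul, smul_eq_mul, rowOf, dt]
  ring

lemma rowOf_ne_zero (f : (Fin 3 → ℂ) →ₗ[ℂ] ℂ) (hf : f ≠ 0) : rowOf f ≠ 0 := by
  intro h
  apply hf
  apply LinearMap.ext
  intro v
  rw [apply_eq_dt, h, LinearMap.zero_apply]
  simp [dt]

lemma dt_smul_left (a : ℂ) (w v : Fin 3 → ℂ) : dt (a • w) v = a * dt w v := by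
  simp only [dt, Pi.smul_apply, smul_eq_mul]; ring

lemma dt_smul_right (a : ℂ) (w v : Fin 3 → ℂ) : dt w (a • v) = a * dt w v := by
  simp only [dt, Pi.smul_apply, smul_eq_mul]; ring

lemma mem_line_iff (f : (Fin 3 → ℂ) →ₗ[ℂ] ℂ) {S : Set ProjPlane}
    (hS : S = {p : ProjPlane | f p.rep = 0}) (p : ProjPlane) :
    p ∈ S ↔ dt (rowOf f) p.rep = 0 := by
  rw [hS]; simp only [Set.mem_setOf_eq, apply_eq_dt]

lemma mk_mem (f : (Fin 3 → ℂ) →ₗ[ℂ] ℂ) {S : Set ProjPlane}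
    (hS : S = {p : ProjPlane | f p.rep = 0}) (v : Fin 3 → ℂ) (hv : v ≠ 0)
    (h : dt (rowOf f) v = 0) : Projectivization.mk ℂ v hv ∈ S := by
  rw [mem_line_iff f hS]
  obtain ⟨a, ha⟩ := (Projectivization.mk_eq_mk_iff ℂ _ _
    (Projectivization.rep_nonzero _) hv).mp (Projectivization.mk_rep (Projectivization.mk ℂ v hv))
  rw [← ha, Units.smul_def, dt_smul_right, h, mul_zero]

lemma eq_of_rep_smul (p q : ProjPlane) (a : ℂ) (h : p.rep = a • q.rep) : p = q := by
  have h2 := (Projectivization.mk_eq_mk_iff' ℂ p.rep q.rep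
    (Projectivization.rep_nonzero p) (Projectivization.rep_nonzero q)).mpr ⟨a, h.symm⟩
  rwa [Projectivization.mk_rep, Projectivization.mk_rep] at h2

end St14X


/-- there is no arrangement of 14 lines partitioned as `L ⊔ K` with
`|L| = 6`, `|K| = 8`, such that every intersection of a line of `L` with a line of `K`
is a quadruple point of type (LKLK), every line of `L` carries exactly 4 such points, and
every line of `K` carries exactly 3 such points. -/
theorem statement14 :
    ¬ ∃ (A L K : Finset (Set ProjPlane)),
      (∀ S ∈ A, IsProjLine S) ∧ A.card = 14 ∧
      Disjoint L K ∧ L ∪ K = A ∧ L.card = 6 ∧ K.card = 8 ∧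
      (∀ l ∈ L, ∀ k ∈ K, ∀ p : ProjPlane, p ∈ l → p ∈ k →
        (linesThrough L p).card = 2 ∧ (linesThrough K p).card = 2) ∧
      (∀ l ∈ L, {p : ProjPlane | p ∈ l ∧ (linesThrough L p).card = 2 ∧
        (linesThrough K p).card = 2}.ncard = 4) ∧
      (∀ k ∈ K, {p : ProjPlane | p ∈ k ∧ (linesThrough L p).card = 2 ∧
        (linesThrough K p).card = 2}.ncard = 3) := by
  rintro ⟨A, L, K, hA, -, hdisj, hunion, hL, hK, hquad, -, -⟩
  classical
  have hLA : ∀ l ∈ L, l ∈ A := fun l hl => hunion ▸ Finset.mem_union_left K hl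
  have hKA : ∀ k ∈ K, k ∈ A := fun k hk => hunion ▸ Finset.mem_union_right L hk
  have hLK : ∀ l ∈ L, ∀ k ∈ K, l ≠ k := fun l hl k hk h =>
    (Finset.disjoint_left.mp hdisj hl) (h ▸ hk)
  -- choose covectors for all lines of A
  have hcov : ∀ S : Set ProjPlane, ∃ f : (Fin 3 → ℂ) →ₗ[ℂ] ℂ,
      S ∈ A → f ≠ 0 ∧ S = {p : ProjPlane | f p.rep = 0} := by
    intro S
    by_cases hS : S ∈ A
    · obtain ⟨f, h1, h2⟩ := hA S hS
      exact ⟨f, fun _ => ⟨h1, h2⟩⟩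
    · exact ⟨0, fun h => absurd h hS⟩
  choose cv hcv using hcov
  set row : Set ProjPlane → Fin 3 → ℂ := fun S => St14X.rowOf (cv S) with hrowdef
  have hmemA : ∀ S ∈ A, ∀ p : ProjPlane, p ∈ S ↔ St14X.dt (row S) p.rep = 0 :=
    fun S hS p => St14X.mem_line_iff (cv S) (hcv S hS).2 p
  have hrow0 : ∀ S ∈ A, row S ≠ 0 := fun S hS => St14X.rowOf_ne_zero _ (hcv S hS).1
  -- distinct lines have non-proportional rows
  have hcrne : ∀ S ∈ A, ∀ T ∈ A, S ≠ T → St14X.cr (row S) (row T) ≠ 0 := by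
    intro S hS T hT hST h0
    have e0 := congrFun h0 0
    have e1 := congrFun h0 1
    have e2 := congrFun h0 2
    rw [St14X.cr0] at e0
    rw [St14X.cr1] at e1
    rw [St14X.cr2] at e2
    simp only [Pi.zero_apply] at e0 e1 e2
    obtain ⟨a, ha⟩ := St14X.prop_of_rel (row S) (row T) (hrow0 S hS)
      (by linear_combination e2) (by linear_combination -e1) (by linear_combination e0)
    have ha0 : a ≠ 0 := by
      rintro rfl
      rw [zero_smul] at ha
      exact hrow0 T hT ha
    apply hST
    apply Set.ext
    intro p
    rw [hmemA S hS p, hmemA T hT p, ha, St14X.dt_smul_left]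
    exact ⟨fun h => by rw [h, mul_zero], fun h => (mul_eq_zero.mp h).resolve_left ha0⟩
  -- a common point of two distinct lines is a multiple of the cross product of rows
  have hprop : ∀ S ∈ A, ∀ T ∈ A, S ≠ T → ∀ p : ProjPlane, p ∈ S → p ∈ T →
      ∃ a : ℂ, a ≠ 0 ∧ p.rep = a • St14X.cr (row S) (row T) := by
    intro S hS T hT hST p hpS hpT
    have h1 : St14X.dt (row S) p.rep = 0 := (hmemA S hS p).mp hpS
    have h2 : St14X.dt (row T) p.rep = 0 := (hmemA T hT p).mp hpT
    obtain ⟨r01, r02, r12⟩ := St14X.rel_of_dt (row S) (row T) p.rep h1 h2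
    obtain ⟨a, ha⟩ := St14X.prop_of_rel _ _ (hcrne S hS T hT hST) r01 r02 r12
    refine ⟨a, ?_, ha⟩
    rintro rfl
    rw [zero_smul] at ha
    exact Projectivization.rep_nonzero p ha
  -- two distinct lines meet in at most one point
  have hUniq : ∀ S ∈ A, ∀ T ∈ A, S ≠ T → ∀ p q : ProjPlane,
      p ∈ S → p ∈ T → q ∈ S → q ∈ T → p = q := by
    intro S hS T hT hST p q hpS hpT hqS hqT
    obtain ⟨a, ha0, ha⟩ := hprop S hS T hT hST p hpS hpT
    obtain ⟨b, hb0, hb⟩ := hprop S hS T hT hST q hqS hqT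
    apply St14X.eq_of_rep_smul p q (a / b)
    rw [ha, hb, smul_smul, div_mul_cancel₀ a hb0]
  -- two lines always meet
  have hMeet : ∀ S ∈ A, ∀ T ∈ A, S ≠ T → ∃ p : ProjPlane, p ∈ S ∧ p ∈ T := by
    intro S hS T hT hST
    refine ⟨Projectivization.mk ℂ (St14X.cr (row S) (row T)) (hcrne S hS T hT hST), ?_, ?_⟩
    · exact St14X.mk_mem (cv S) (hcv S hS).2 _ _ (St14X.dt_cr_left _ _)
    · exact St14X.mk_mem (cv T) (hcv T hT).2 _ _ (St14X.dt_cr_right _ _)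
  -- the intersection point of l ∈ L and k ∈ K
  obtain ⟨pt0⟩ : Nonempty ProjPlane :=
    ⟨Projectivization.mk ℂ (fun _ => 1) (fun h => one_ne_zero (congrFun h 0))⟩
  have hpkt' : ∀ l k : Set ProjPlane, ∃ p : ProjPlane, l ∈ L → k ∈ K → p ∈ l ∧ p ∈ k := by
    intro l k
    by_cases hl : l ∈ L
    · by_cases hk : k ∈ K
      · obtain ⟨p, hp⟩ := hMeet l (hLA l hl) k (hKA k hk) (hLK l hl k hk)
        exact ⟨p, fun _ _ => hp⟩
      · exact ⟨pt0, fun _ h => absurd h hk⟩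
    · exact ⟨pt0, fun h _ => absurd h hl⟩
  choose pkt hpkt using hpkt'
  have pktl : ∀ l ∈ L, ∀ k ∈ K, pkt l k ∈ l := fun l hl k hk => (hpkt l k hl hk).1
  have pktk : ∀ l ∈ L, ∀ k ∈ K, pkt l k ∈ k := fun l hl k hk => (hpkt l k hl hk).2
  have pkt_eq : ∀ l ∈ L, ∀ k ∈ K, ∀ p : ProjPlane, p ∈ l → p ∈ k → p = pkt l k :=
    fun l hl k hk p hpl hpk => hUniq l (hLA l hl) k (hKA k hk) (hLK l hl k hk) p (pkt l k)
      hpl hpk (pktl l hl k hk) (pktk l hl k hk)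
  -- the partner of l at its intersection with k
  have hprt' : ∀ l k : Set ProjPlane, ∃ x : Set ProjPlane, l ∈ L → k ∈ K →
      x ∈ L ∧ x ≠ l ∧ pkt l k ∈ x ∧ ∀ y ∈ L, pkt l k ∈ y → y = l ∨ y = x := by
    intro l k
    by_cases hl : l ∈ L
    · by_cases hk : k ∈ K
      · have h2 : (linesThrough L (pkt l k)).card = 2 :=
          (hquad l hl k hk (pkt l k) (pktl l hl k hk) (pktk l hl k hk)).1
        have hlm : l ∈ linesThrough L (pkt l k) :=
          Finset.mem_filter.mpr ⟨hl, pktl l hl k hk⟩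
        have h1 : ((linesThrough L (pkt l k)).erase l).card = 1 := by
          rw [Finset.card_erase_of_mem hlm, h2]
        obtain ⟨x, hx⟩ := Finset.card_eq_one.mp h1
        have hxm : x ∈ (linesThrough L (pkt l k)).erase l := hx ▸ Finset.mem_singleton_self x
        have hxl : x ≠ l := (Finset.mem_erase.mp hxm).1
        have hxLT := (Finset.mem_erase.mp hxm).2
        refine ⟨x, fun _ _ =>
          ⟨(Finset.mem_filter.mp hxLT).1, hxl, (Finset.mem_filter.mp hxLT).2, ?_⟩⟩
        intro y hy hpy
        by_cases hyl : y = l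
        · exact Or.inl hyl
        · right
          have hym : y ∈ (linesThrough L (pkt l k)).erase l :=
            Finset.mem_erase.mpr ⟨hyl, Finset.mem_filter.mpr ⟨hy, hpy⟩⟩
          rw [hx] at hym
          exact Finset.mem_singleton.mp hym
      · exact ⟨l, fun _ h => absurd h hk⟩
    · exact ⟨l, fun h _ => absurd h hl⟩
  choose prt hprt using hprt'
  have prtL : ∀ l ∈ L, ∀ k ∈ K, prt l k ∈ L := fun l hl k hk => (hprt l k hl hk).1
  have prt_ne : ∀ l ∈ L, ∀ k ∈ K, prt l k ≠ l := fun l hl k hk => (hprt l k hl hk).2.1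
  have prt_mem : ∀ l ∈ L, ∀ k ∈ K, pkt l k ∈ prt l k := fun l hl k hk => (hprt l k hl hk).2.2.1
  have prt_elim : ∀ l ∈ L, ∀ k ∈ K, ∀ y ∈ L, pkt l k ∈ y → y = l ∨ y = prt l k :=
    fun l hl k hk => (hprt l k hl hk).2.2.2
  have collide : ∀ k ∈ K, ∀ a ∈ L, ∀ b ∈ L, prt a k = b → pkt a k = pkt b k := by
    intro k hk a ha b hb hab
    exact pkt_eq b hb k hk (pkt a k) (hab ▸ prt_mem a ha k hk) (pktk a ha k hk)
  have tri : ∀ k ∈ K, ∀ a ∈ L, ∀ c ∈ L, c ≠ a → c ≠ prt a k → pkt c k ≠ pkt a k := by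
    intro k hk a ha c hc hca hcp h
    rcases prt_elim a ha k hk c hc (h ▸ pktl c hc k hk) with h' | h'
    · exact hca h'
    · exact hcp h'
  -- each line of L has exactly 4 neighbors
  have hNb4 : ∀ l ∈ L,
      ((L.erase l).filter
        (fun x => ∃ p : ProjPlane, ∃ k ∈ K, p ∈ l ∧ p ∈ x ∧ p ∈ k)).card = 4 := by
    intro l hl
    set T := (L.erase l).filter
      (fun x => ∃ p : ProjPlane, ∃ k ∈ K, p ∈ l ∧ p ∈ x ∧ p ∈ k) with hT
    have hmaps : ∀ k ∈ K, prt l k ∈ T := by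
      intro k hk
      exact Finset.mem_filter.mpr ⟨Finset.mem_erase.mpr ⟨prt_ne l hl k hk, prtL l hl k hk⟩,
        pkt l k, k, hk, pktl l hl k hk, prt_mem l hl k hk, pktk l hl k hk⟩
    have hcount := Finset.card_eq_sum_card_fiberwise hmaps
    have hfib : ∀ x ∈ T, (K.filter fun k => prt l k = x).card = 2 := by
      intro x hx
      obtain ⟨hxe, p0, k0, hk0, hp0l, hp0x, hp0k⟩ := Finset.mem_filter.mp hx
      have hxL : x ∈ L := (Finset.mem_erase.mp hxe).2
      have hxl : x ≠ l := (Finset.mem_erase.mp hxe).1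
      have hset : K.filter (fun k => prt l k = x) = linesThrough K p0 := by
        ext k
        simp only [Finset.mem_filter, linesThrough]
        constructor
        · rintro ⟨hk, hpr⟩
          refine ⟨hk, ?_⟩
          have he : p0 = pkt l k :=
            hUniq l (hLA l hl) x (hLA x hxL) (Ne.symm hxl) p0 (pkt l k)
              hp0l hp0x (pktl l hl k hk) (hpr ▸ prt_mem l hl k hk)
          rw [he]
          exact pktk l hl k hk
        · rintro ⟨hk, hp0k'⟩
          refine ⟨hk, ?_⟩
          have he : p0 = pkt l k := pkt_eq l hl k hk p0 hp0l hp0k'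
          rcases prt_elim l hl k hk x hxL (he ▸ hp0x) with h' | h'
          · exact absurd h' hxl
          · exact h'.symm
      rw [hset]
      exact (hquad l hl k0 hk0 p0 hp0l hp0k).2
    rw [Finset.sum_congr rfl hfib, Finset.sum_const, smul_eq_mul, hK] at hcount
    omega
  have hNb1 : ∀ l ∈ L,
      ((L.erase l).filter
        (fun x => ¬ ∃ p : ProjPlane, ∃ k ∈ K, p ∈ l ∧ p ∈ x ∧ p ∈ k)).card = 1 := by
    intro l hl
    have h5 : (L.erase l).card = 5 := by rw [Finset.card_erase_of_mem hl, hL]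
    have hsplit := Finset.card_filter_add_card_filter_not
      (s := L.erase l) (p := fun x => ∃ p : ProjPlane, ∃ k ∈ K, p ∈ l ∧ p ∈ x ∧ p ∈ k)
    rw [hNb4 l hl, h5] at hsplit
    omega
  -- the unique non-neighbor sig l
  have hsig' : ∀ l : Set ProjPlane, ∃ s : Set ProjPlane, l ∈ L →
      s ∈ L ∧ s ≠ l ∧ (¬ ∃ p : ProjPlane, ∃ k ∈ K, p ∈ l ∧ p ∈ s ∧ p ∈ k) ∧
        ∀ y ∈ L, y ≠ l → (¬ ∃ p : ProjPlane, ∃ k ∈ K, p ∈ l ∧ p ∈ y ∧ p ∈ k) → y = s := by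
    intro l
    by_cases hl : l ∈ L
    · obtain ⟨s, hs⟩ := Finset.card_eq_one.mp (hNb1 l hl)
      have hsm : s ∈ (L.erase l).filter
          (fun x => ¬ ∃ p : ProjPlane, ∃ k ∈ K, p ∈ l ∧ p ∈ x ∧ p ∈ k) :=
        hs ▸ Finset.mem_singleton_self s
      obtain ⟨hse, hsnb⟩ := Finset.mem_filter.mp hsm
      refine ⟨s, fun _ => ⟨(Finset.mem_erase.mp hse).2, (Finset.mem_erase.mp hse).1, hsnb, ?_⟩⟩
      intro y hy hyl hynb
      have hym : y ∈ (L.erase l).filter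
          (fun x => ¬ ∃ p : ProjPlane, ∃ k ∈ K, p ∈ l ∧ p ∈ x ∧ p ∈ k) :=
        Finset.mem_filter.mpr ⟨Finset.mem_erase.mpr ⟨hyl, hy⟩, hynb⟩
      rw [hs] at hym
      exact Finset.mem_singleton.mp hym
    · exact ⟨l, fun h => absurd h hl⟩
  choose sig hsig using hsig'
  have sigL : ∀ l ∈ L, sig l ∈ L := fun l hl => (hsig l hl).1
  have sig_ne : ∀ l ∈ L, sig l ≠ l := fun l hl => (hsig l hl).2.1
  have sig_nnb : ∀ l ∈ L, ¬ ∃ p : ProjPlane, ∃ k ∈ K, p ∈ l ∧ p ∈ sig l ∧ p ∈ k :=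
    fun l hl => (hsig l hl).2.2.1
  have sig_uniq : ∀ l ∈ L, ∀ y ∈ L, y ≠ l →
      (¬ ∃ p : ProjPlane, ∃ k ∈ K, p ∈ l ∧ p ∈ y ∧ p ∈ k) → y = sig l :=
    fun l hl => (hsig l hl).2.2.2
  have sig_invol : ∀ l ∈ L, sig (sig l) = l := by
    intro l hl
    have h := sig_uniq (sig l) (sigL l hl) l hl (Ne.symm (sig_ne l hl))
      (by rintro ⟨p, k, hk, hps, hpl, hpk⟩; exact sig_nnb l hl ⟨p, k, hk, hpl, hps, hpk⟩)
    exact h.symm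
  have prt_ne_sig : ∀ l ∈ L, ∀ k ∈ K, prt l k ≠ sig l := by
    intro l hl k hk h
    exact sig_nnb l hl ⟨pkt l k, k, hk, pktl l hl k hk, h ▸ prt_mem l hl k hk, pktk l hl k hk⟩
  -- no three lines of L are concurrent
  have no3 : ∀ a ∈ L, ∀ b ∈ L, ∀ c ∈ L, a ≠ b → a ≠ c → b ≠ c →
      ∀ q : ProjPlane, q ∈ a → q ∈ b → q ∈ c → False := by
    intro a ha b hb c hc hab hac hbc q hqa hqb hqc
    by_cases hkq : ∃ k ∈ K, q ∈ k
    · obtain ⟨k, hk, hqk⟩ := hkq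
      have h2 : (linesThrough L q).card = 2 := (hquad a ha k hk q hqa hqk).1
      have habc : ({a, b, c} : Finset (Set ProjPlane)) ⊆ linesThrough L q := by
        intro x hx
        simp only [Finset.mem_insert, Finset.mem_singleton] at hx
        rcases hx with rfl | rfl | rfl
        · exact Finset.mem_filter.mpr ⟨ha, hqa⟩
        · exact Finset.mem_filter.mpr ⟨hb, hqb⟩
        · exact Finset.mem_filter.mpr ⟨hc, hqc⟩
      have h3 : ({a, b, c} : Finset (Set ProjPlane)).card = 3 := by
        rw [Finset.card_insert_of_notMem (by simp [hab, hac]),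
          Finset.card_insert_of_notMem (by simp [hbc]), Finset.card_singleton]
      have hle := Finset.card_le_card habc
      omega
    · push_neg at hkq
      have hb' : b = sig a := by
        apply sig_uniq a ha b hb (Ne.symm hab)
        rintro ⟨p, k, hk, hpa, hpb, hpk⟩
        have he := hUniq a (hLA a ha) b (hLA b hb) hab p q hpa hpb hqa hqb
        exact hkq k hk (he ▸ hpk)
      have hc' : c = sig a := by
        apply sig_uniq a ha c hc (Ne.symm hac)
        rintro ⟨p, k, hk, hpa, hpc, hpk⟩
        have he := hUniq a (hLA a ha) c (hLA c hc) hac p q hpa hpc hqa hqc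
        exact hkq k hk (he ▸ hpk)
      exact hbc (hb'.trans hc'.symm)
  -- labeling L = {l1,...,l6} with sig-pairs (l1,l2), (l3,l4), (l5,l6)
  obtain ⟨l1, hl1⟩ := Finset.card_pos.mp (by rw [hL]; norm_num : 0 < L.card)
  obtain ⟨l2, hl2def⟩ : ∃ x, x = sig l1 := ⟨_, rfl⟩
  have hl2 : l2 ∈ L := hl2def ▸ sigL l1 hl1
  have ne21 : l2 ≠ l1 := hl2def ▸ sig_ne l1 hl1
  have sig2 : sig l2 = l1 := by rw [hl2def, sig_invol l1 hl1]
  have hsub2 : ({l1, l2} : Finset (Set ProjPlane)) ⊆ L := by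
    intro x hx
    simp only [Finset.mem_insert, Finset.mem_singleton] at hx
    rcases hx with rfl | rfl
    · exact hl1
    · exact hl2
  have hc4 : (L \ {l1, l2}).card = 4 := by
    rw [Finset.card_sdiff_of_subset hsub2, hL,
      Finset.card_insert_of_notMem (by simp [Ne.symm ne21]), Finset.card_singleton]
  obtain ⟨l3, hl3m⟩ := Finset.card_pos.mp (by rw [hc4]; norm_num : 0 < (L \ {l1, l2}).card)
  have hl3 : l3 ∈ L := (Finset.mem_sdiff.mp hl3m).1
  have hl3n := (Finset.mem_sdiff.mp hl3m).2
  have ne31 : l3 ≠ l1 := fun h => hl3n (by simp [h])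
  have ne32 : l3 ≠ l2 := fun h => hl3n (by simp [h])
  obtain ⟨l4, hl4def⟩ : ∃ x, x = sig l3 := ⟨_, rfl⟩
  have hl4 : l4 ∈ L := hl4def ▸ sigL l3 hl3
  have ne43 : l4 ≠ l3 := hl4def ▸ sig_ne l3 hl3
  have sig4 : sig l4 = l3 := by rw [hl4def, sig_invol l3 hl3]
  have ne41 : l4 ≠ l1 := by
    intro h
    apply ne32
    rw [hl2def, ← h, hl4def, sig_invol l3 hl3]
  have ne42 : l4 ≠ l2 := by
    intro h
    apply ne31
    rw [← sig2, ← h, hl4def, sig_invol l3 hl3]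
  have hsub4 : ({l3, l4} : Finset (Set ProjPlane)) ⊆ L \ {l1, l2} := by
    intro x hx
    simp only [Finset.mem_insert, Finset.mem_singleton] at hx
    rcases hx with rfl | rfl
    · exact hl3m
    · exact Finset.mem_sdiff.mpr ⟨hl4, by simp [ne41, ne42]⟩
  have hc2 : ((L \ {l1, l2}) \ {l3, l4}).card = 2 := by
    rw [Finset.card_sdiff_of_subset hsub4, hc4,
      Finset.card_insert_of_notMem (by simp [Ne.symm ne43]), Finset.card_singleton]
  obtain ⟨l5, hl5m⟩ := Finset.card_pos.mp
    (by rw [hc2]; norm_num : 0 < ((L \ {l1, l2}) \ {l3, l4}).card)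
  have hl5m' := (Finset.mem_sdiff.mp hl5m).1
  have hl5 : l5 ∈ L := (Finset.mem_sdiff.mp hl5m').1
  have hl5n2 := (Finset.mem_sdiff.mp hl5m').2
  have hl5n4 := (Finset.mem_sdiff.mp hl5m).2
  have ne51 : l5 ≠ l1 := fun h => hl5n2 (by simp [h])
  have ne52 : l5 ≠ l2 := fun h => hl5n2 (by simp [h])
  have ne53 : l5 ≠ l3 := fun h => hl5n4 (by simp [h])
  have ne54 : l5 ≠ l4 := fun h => hl5n4 (by simp [h])
  obtain ⟨l6, hl6def⟩ : ∃ x, x = sig l5 := ⟨_, rfl⟩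
  have hl6 : l6 ∈ L := hl6def ▸ sigL l5 hl5
  have ne65 : l6 ≠ l5 := hl6def ▸ sig_ne l5 hl5
  have sig6 : sig l6 = l5 := by rw [hl6def, sig_invol l5 hl5]
  have ne61 : l6 ≠ l1 := by
    intro h
    apply ne52
    rw [hl2def, ← h, hl6def, sig_invol l5 hl5]
  have ne62 : l6 ≠ l2 := by
    intro h
    apply ne51
    rw [← sig2, ← h, hl6def, sig_invol l5 hl5]
  have ne63 : l6 ≠ l3 := by
    intro h
    apply ne54
    rw [hl4def, ← h, hl6def, sig_invol l5 hl5]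
  have ne64 : l6 ≠ l4 := by
    intro h
    apply ne53
    rw [← sig4, ← h, hl6def, sig_invol l5 hl5]
  -- enumeration of L
  have hLenum : ∀ x ∈ L, x = l1 ∨ x = l2 ∨ x = l3 ∨ x = l4 ∨ x = l5 ∨ x = l6 := by
    have hsub : ({l1, l2, l3, l4, l5, l6} : Finset (Set ProjPlane)) ⊆ L := by
      intro x hx
      simp only [Finset.mem_insert, Finset.mem_singleton] at hx
      rcases hx with rfl | rfl | rfl | rfl | rfl | rfl
      · exact hl1
      · exact hl2
      · exact hl3
      · exact hl4
      · exact hl5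
      · exact hl6
    have hcard6 : ({l1, l2, l3, l4, l5, l6} : Finset (Set ProjPlane)).card = 6 := by
      rw [Finset.card_insert_of_notMem (by
          simp only [Finset.mem_insert, Finset.mem_singleton]
          push_neg
          exact ⟨Ne.symm ne21, Ne.symm ne31, Ne.symm ne41, Ne.symm ne51, Ne.symm ne61⟩),
        Finset.card_insert_of_notMem (by
          simp only [Finset.mem_insert, Finset.mem_singleton]
          push_neg
          exact ⟨Ne.symm ne32, Ne.symm ne42, Ne.symm ne52, Ne.symm ne62⟩),
        Finset.card_insert_of_notMem (by
          simp only [Finset.mem_insert, Finset.mem_singleton]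
          push_neg
          exact ⟨Ne.symm ne43, Ne.symm ne53, Ne.symm ne63⟩),
        Finset.card_insert_of_notMem (by
          simp only [Finset.mem_insert, Finset.mem_singleton]
          push_neg
          exact ⟨Ne.symm ne54, Ne.symm ne64⟩),
        Finset.card_insert_of_notMem (by simp [Ne.symm ne65]), Finset.card_singleton]
    have heq : ({l1, l2, l3, l4, l5, l6} : Finset (Set ProjPlane)) = L :=
      Finset.eq_of_subset_of_card_le hsub (by rw [hL, hcard6])
    intro x hx
    rw [← heq] at hx
    simpa using hx
  -- probes
  have probe1 : ∀ k ∈ K, ∀ c ∈ L, c ≠ l1 → c ≠ prt l1 k → prt c k ≠ l1 := by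
    intro k hk c hc h1 hx h
    exact tri k hk l1 hl1 c hc h1 hx (collide k hk c hc l1 hl1 h)
  have probe2 : ∀ k ∈ K, ∀ c ∈ L, c ≠ l2 → c ≠ prt l2 k → prt c k ≠ l2 := by
    intro k hk c hc h1 hx h
    exact tri k hk l2 hl2 c hc h1 hx (collide k hk c hc l2 hl2 h)
  have probe1' : ∀ k ∈ K, ∀ c ∈ L, c ≠ l1 → c ≠ prt l1 k → prt c k ≠ prt l1 k := by
    intro k hk c hc h1 hx h
    refine tri k hk l1 hl1 c hc h1 hx ?_
    exact (collide k hk c hc (prt l1 k) (prtL l1 hl1 k hk) h).trans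
      (collide k hk l1 hl1 (prt l1 k) (prtL l1 hl1 k hk) rfl).symm
  have probe2' : ∀ k ∈ K, ∀ c ∈ L, c ≠ l2 → c ≠ prt l2 k → prt c k ≠ prt l2 k := by
    intro k hk c hc h1 hx h
    refine tri k hk l2 hl2 c hc h1 hx ?_
    exact (collide k hk c hc (prt l2 k) (prtL l2 hl2 k hk) h).trans
      (collide k hk l2 hl2 (prt l2 k) (prtL l2 hl2 k hk) rfl).symm
  -- the partner of l1 lies in {l3,l4,l5,l6}, same for l2
  have prt1mem : ∀ k ∈ K, prt l1 k = l3 ∨ prt l1 k = l4 ∨ prt l1 k = l5 ∨ prt l1 k = l6 := by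
    intro k hk
    rcases hLenum (prt l1 k) (prtL l1 hl1 k hk) with h | h | h | h | h | h
    · exact absurd h (prt_ne l1 hl1 k hk)
    · exact absurd (h.trans hl2def) (prt_ne_sig l1 hl1 k hk)
    · exact Or.inl h
    · exact Or.inr (Or.inl h)
    · exact Or.inr (Or.inr (Or.inl h))
    · exact Or.inr (Or.inr (Or.inr h))
  have prt2mem : ∀ k ∈ K, prt l2 k = l3 ∨ prt l2 k = l4 ∨ prt l2 k = l5 ∨ prt l2 k = l6 := by
    intro k hk
    rcases hLenum (prt l2 k) (prtL l2 hl2 k hk) with h | h | h | h | h | h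
    · exact absurd (h.trans sig2.symm) (prt_ne_sig l2 hl2 k hk)
    · exact absurd h (prt_ne l2 hl2 k hk)
    · exact Or.inl h
    · exact Or.inr (Or.inl h)
    · exact Or.inr (Or.inr (Or.inl h))
    · exact Or.inr (Or.inr (Or.inr h))
  have xy_ne : ∀ k ∈ K, prt l1 k ≠ prt l2 k := by
    intro k hk h
    have hne2x : l2 ≠ prt l1 k := fun hh => prt_ne_sig l1 hl1 k hk (by rw [← hh, hl2def])
    have e2 := collide k hk l2 hl2 (prt l2 k) (prtL l2 hl2 k hk) rfl
    rw [← h] at e2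
    have e1 := collide k hk l1 hl1 (prt l1 k) (prtL l1 hl1 k hk) rfl
    exact tri k hk l1 hl1 l2 hl2 ne21 hne2x (e2.trans e1.symm)
  -- bad pairs: partners of l1 and l2 can not form a sig-pair
  have bad34 : ∀ k ∈ K, prt l1 k = l3 → prt l2 k = l4 → False := by
    intro k hk h1 h2
    rcases hLenum (prt l5 k) (prtL l5 hl5 k hk) with h | h | h | h | h | h
    · exact probe1 k hk l5 hl5 ne51 (by rw [h1]; exact ne53) h
    · exact probe2 k hk l5 hl5 ne52 (by rw [h2]; exact ne54) h
    · exact probe1' k hk l5 hl5 ne51 (by rw [h1]; exact ne53) (h.trans h1.symm)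
    · exact probe2' k hk l5 hl5 ne52 (by rw [h2]; exact ne54) (h.trans h2.symm)
    · exact prt_ne l5 hl5 k hk h
    · exact prt_ne_sig l5 hl5 k hk (h.trans hl6def)
  have bad43 : ∀ k ∈ K, prt l1 k = l4 → prt l2 k = l3 → False := by
    intro k hk h1 h2
    rcases hLenum (prt l5 k) (prtL l5 hl5 k hk) with h | h | h | h | h | h
    · exact probe1 k hk l5 hl5 ne51 (by rw [h1]; exact ne54) h
    · exact probe2 k hk l5 hl5 ne52 (by rw [h2]; exact ne53) h
    · exact probe2' k hk l5 hl5 ne52 (by rw [h2]; exact ne53) (h.trans h2.symm)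
    · exact probe1' k hk l5 hl5 ne51 (by rw [h1]; exact ne54) (h.trans h1.symm)
    · exact prt_ne l5 hl5 k hk h
    · exact prt_ne_sig l5 hl5 k hk (h.trans hl6def)
  have bad56 : ∀ k ∈ K, prt l1 k = l5 → prt l2 k = l6 → False := by
    intro k hk h1 h2
    rcases hLenum (prt l3 k) (prtL l3 hl3 k hk) with h | h | h | h | h | h
    · exact probe1 k hk l3 hl3 ne31 (by rw [h1]; exact Ne.symm ne53) h
    · exact probe2 k hk l3 hl3 ne32 (by rw [h2]; exact Ne.symm ne63) h
    · exact prt_ne l3 hl3 k hk h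
    · exact prt_ne_sig l3 hl3 k hk (h.trans hl4def)
    · exact probe1' k hk l3 hl3 ne31 (by rw [h1]; exact Ne.symm ne53) (h.trans h1.symm)
    · exact probe2' k hk l3 hl3 ne32 (by rw [h2]; exact Ne.symm ne63) (h.trans h2.symm)
  have bad65 : ∀ k ∈ K, prt l1 k = l6 → prt l2 k = l5 → False := by
    intro k hk h1 h2
    rcases hLenum (prt l3 k) (prtL l3 hl3 k hk) with h | h | h | h | h | h
    · exact probe1 k hk l3 hl3 ne31 (by rw [h1]; exact Ne.symm ne63) h
    · exact probe2 k hk l3 hl3 ne32 (by rw [h2]; exact Ne.symm ne53) h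
    · exact prt_ne l3 hl3 k hk h
    · exact prt_ne_sig l3 hl3 k hk (h.trans hl4def)
    · exact probe2' k hk l3 hl3 ne32 (by rw [h2]; exact Ne.symm ne53) (h.trans h2.symm)
    · exact probe1' k hk l3 hl3 ne31 (by rw [h1]; exact Ne.symm ne63) (h.trans h1.symm)
  -- the image finset D
  set D : Finset (Set ProjPlane × Set ProjPlane) :=
    (({l3, l4} : Finset (Set ProjPlane)) ×ˢ ({l5, l6} : Finset (Set ProjPlane))) ∪
      (({l5, l6} : Finset (Set ProjPlane)) ×ˢ ({l3, l4} : Finset (Set ProjPlane))) with hDdef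
  have hDcard : D.card = 8 := by
    have c34 : ({l3, l4} : Finset (Set ProjPlane)).card = 2 := by
      rw [Finset.card_insert_of_notMem (by simp [Ne.symm ne43]), Finset.card_singleton]
    have c56 : ({l5, l6} : Finset (Set ProjPlane)).card = 2 := by
      rw [Finset.card_insert_of_notMem (by simp [Ne.symm ne65]), Finset.card_singleton]
    have hdisjD : Disjoint
        (({l3, l4} : Finset (Set ProjPlane)) ×ˢ ({l5, l6} : Finset (Set ProjPlane)))
        (({l5, l6} : Finset (Set ProjPlane)) ×ˢ ({l3, l4} : Finset (Set ProjPlane))) := by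
      rw [Finset.disjoint_left]
      rintro ⟨u, v⟩ h1 h2
      rw [Finset.mem_product] at h1 h2
      simp only [Finset.mem_insert, Finset.mem_singleton] at h1 h2
      rcases h1.1 with rfl | rfl <;> rcases h2.1 with h | h
      · exact ne53 h.symm
      · exact ne63 h.symm
      · exact ne54 h.symm
      · exact ne64 h.symm
    rw [hDdef, Finset.card_union_of_disjoint hdisjD, Finset.card_product,
      Finset.card_product, c34, c56]
  have himg : ∀ k ∈ K, (prt l1 k, prt l2 k) ∈ D := by
    intro k hk
    have hmem : ∀ u v : Set ProjPlane, u ∈ ({l3, l4} : Finset (Set ProjPlane)) →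
        v ∈ ({l5, l6} : Finset (Set ProjPlane)) → (u, v) ∈ D := by
      intro u v hu hv
      rw [hDdef]
      exact Finset.mem_union_left _ (Finset.mem_product.mpr ⟨hu, hv⟩)
    have hmem' : ∀ u v : Set ProjPlane, u ∈ ({l5, l6} : Finset (Set ProjPlane)) →
        v ∈ ({l3, l4} : Finset (Set ProjPlane)) → (u, v) ∈ D := by
      intro u v hu hv
      rw [hDdef]
      exact Finset.mem_union_right _ (Finset.mem_product.mpr ⟨hu, hv⟩)
    rcases prt1mem k hk with h1 | h1 | h1 | h1 <;> rcases prt2mem k hk with h2 | h2 | h2 | h2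
    · exact absurd (h1.trans h2.symm) (xy_ne k hk)
    · exact absurd (bad34 k hk h1 h2) id
    · exact hmem _ _ (by simp [h1]) (by simp [h2])
    · exact hmem _ _ (by simp [h1]) (by simp [h2])
    · exact absurd (bad43 k hk h1 h2) id
    · exact absurd (h1.trans h2.symm) (xy_ne k hk)
    · exact hmem _ _ (by simp [h1]) (by simp [h2])
    · exact hmem _ _ (by simp [h1]) (by simp [h2])
    · exact hmem' _ _ (by simp [h1]) (by simp [h2])
    · exact hmem' _ _ (by simp [h1]) (by simp [h2])
    · exact absurd (h1.trans h2.symm) (xy_ne k hk)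
    · exact absurd (bad56 k hk h1 h2) id
    · exact hmem' _ _ (by simp [h1]) (by simp [h2])
    · exact hmem' _ _ (by simp [h1]) (by simp [h2])
    · exact absurd (bad65 k hk h1 h2) id
    · exact absurd (h1.trans h2.symm) (xy_ne k hk)
  -- injectivity of k ↦ (prt l1 k, prt l2 k)
  have hinj : ∀ k ∈ K, ∀ k' ∈ K, (prt l1 k, prt l2 k) = (prt l1 k', prt l2 k') → k = k' := by
    intro k hk k' hk' h
    rw [Prod.mk.injEq] at h
    obtain ⟨h1, h2⟩ := h
    by_contra hkk
    have e1 : pkt l1 k = pkt l1 k' := by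
      apply hUniq l1 (hLA l1 hl1) (prt l1 k) (hLA _ (prtL l1 hl1 k hk))
        (Ne.symm (prt_ne l1 hl1 k hk)) (pkt l1 k) (pkt l1 k')
        (pktl l1 hl1 k hk) (prt_mem l1 hl1 k hk) (pktl l1 hl1 k' hk')
      rw [h1]
      exact prt_mem l1 hl1 k' hk'
    have e2 : pkt l2 k = pkt l2 k' := by
      apply hUniq l2 (hLA l2 hl2) (prt l2 k) (hLA _ (prtL l2 hl2 k hk))
        (Ne.symm (prt_ne l2 hl2 k hk)) (pkt l2 k) (pkt l2 k')
        (pktl l2 hl2 k hk) (prt_mem l2 hl2 k hk) (pktl l2 hl2 k' hk')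
      rw [h2]
      exact prt_mem l2 hl2 k' hk'
    have hne12 : pkt l2 k ≠ pkt l1 k := by
      apply tri k hk l1 hl1 l2 hl2 ne21
      intro hh
      exact prt_ne_sig l1 hl1 k hk (by rw [← hh, hl2def])
    apply hne12
    exact (hUniq k (hKA k hk) k' (hKA k' hk') hkk (pkt l2 k) (pkt l1 k)
      (pktk l2 hl2 k hk) (e2 ▸ pktk l2 hl2 k' hk')
      (pktk l1 hl1 k hk) (e1 ▸ pktk l1 hl1 k' hk'))
  -- surjectivity onto D
  have hsurj : ∀ x ∈ D, ∃ k ∈ K, (prt l1 k, prt l2 k) = x := by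
    have himage : K.image (fun k => (prt l1 k, prt l2 k)) = D := by
      apply Finset.eq_of_subset_of_card_le
      · intro x hx
        obtain ⟨k, hk, rfl⟩ := Finset.mem_image.mp hx
        exact himg k hk
      · rw [hDcard, Finset.card_image_of_injOn, hK]
        intro k hk k' hk' h
        exact hinj k (Finset.mem_coe.mp hk) k' (Finset.mem_coe.mp hk') h
    intro x hx
    rw [← himage] at hx
    exact Finset.mem_image.mp hx
  -- the forced third partner
  have forced : ∀ k ∈ K, ∀ c ∈ L, c ≠ l1 → c ≠ l2 → c ≠ prt l1 k → c ≠ prt l2 k →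
      prt c k ≠ l1 ∧ prt c k ≠ l2 ∧ prt c k ≠ prt l1 k ∧ prt c k ≠ prt l2 k := by
    intro k hk c hc hc1 hc2 hcx hcy
    exact ⟨probe1 k hk c hc hc1 hcx, probe2 k hk c hc hc2 hcy,
      probe1' k hk c hc hc1 hcx, probe2' k hk c hc hc2 hcy⟩
  -- the collinearity equations
  have hE : ∀ k ∈ K, ∀ a ∈ L, ∀ b ∈ L, ∀ u ∈ L, ∀ v ∈ L,
      prt l1 k = a → prt l2 k = b → prt u k = v →
      St14X.d3 (St14X.cr (row l1) (row a)) (St14X.cr (row l2) (row b))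
        (St14X.cr (row u) (row v)) = 0 := by
    intro k hk a ha b hb u hu v hv h1 h2 h3
    have hk' := hKA k hk
    have hne1a : l1 ≠ a := by rw [← h1]; exact Ne.symm (prt_ne l1 hl1 k hk)
    have hne2b : l2 ≠ b := by rw [← h2]; exact Ne.symm (prt_ne l2 hl2 k hk)
    have hneuv : u ≠ v := by rw [← h3]; exact Ne.symm (prt_ne u hu k hk)
    obtain ⟨a1, ha10, ha1⟩ := hprop l1 (hLA l1 hl1) a (hLA a ha) hne1a (pkt l1 k)
      (pktl l1 hl1 k hk) (h1 ▸ prt_mem l1 hl1 k hk)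
    obtain ⟨b1, hb10, hb1⟩ := hprop l2 (hLA l2 hl2) b (hLA b hb) hne2b (pkt l2 k)
      (pktl l2 hl2 k hk) (h2 ▸ prt_mem l2 hl2 k hk)
    obtain ⟨c1, hc10, hc1⟩ := hprop u (hLA u hu) v (hLA v hv) hneuv (pkt u k)
      (pktl u hu k hk) (h3 ▸ prt_mem u hu k hk)
    have hzero : St14X.d3 (pkt l1 k).rep (pkt l2 k).rep (pkt u k).rep = 0 :=
      St14X.d3_eq_zero (row k) _ _ _ (hrow0 k hk')
        ((hmemA k hk' _).mp (pktk l1 hl1 k hk))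
        ((hmemA k hk' _).mp (pktk l2 hl2 k hk))
        ((hmemA k hk' _).mp (pktk u hu k hk))
    rw [ha1, hb1, hc1, St14X.d3_smul] at hzero
    exact (mul_eq_zero.mp hzero).resolve_left
      (mul_ne_zero (mul_ne_zero ha10 hb10) hc10)
  -- extract the four special lines of K
  obtain ⟨kA, hkA, heA⟩ := hsurj (l3, l5)
    (by rw [hDdef]; exact Finset.mem_union_left _ (Finset.mem_product.mpr (by simp)))
  rw [Prod.mk.injEq] at heA
  obtain ⟨hA1, hA2⟩ := heA
  have hA3 : prt l4 kA = l6 := by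
    obtain ⟨f1, f2, f3, f4⟩ := forced kA hkA l4 hl4 ne41 ne42
      (by rw [hA1]; exact ne43) (by rw [hA2]; exact Ne.symm ne54)
    rcases hLenum (prt l4 kA) (prtL l4 hl4 kA hkA) with h | h | h | h | h | h
    · exact absurd h f1
    · exact absurd h f2
    · exact absurd (h.trans hA1.symm) f3
    · exact absurd h (prt_ne l4 hl4 kA hkA)
    · exact absurd (h.trans hA2.symm) f4
    · exact h
  obtain ⟨kB, hkB, heB⟩ := hsurj (l4, l5)
    (by rw [hDdef]; exact Finset.mem_union_left _ (Finset.mem_product.mpr (by simp)))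
  rw [Prod.mk.injEq] at heB
  obtain ⟨hB1, hB2⟩ := heB
  have hB3 : prt l3 kB = l6 := by
    obtain ⟨f1, f2, f3, f4⟩ := forced kB hkB l3 hl3 ne31 ne32
      (by rw [hB1]; exact Ne.symm ne43) (by rw [hB2]; exact Ne.symm ne53)
    rcases hLenum (prt l3 kB) (prtL l3 hl3 kB hkB) with h | h | h | h | h | h
    · exact absurd h f1
    · exact absurd h f2
    · exact absurd h (prt_ne l3 hl3 kB hkB)
    · exact absurd (h.trans hB1.symm) f3
    · exact absurd (h.trans hB2.symm) f4
    · exact h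
  obtain ⟨kC, hkC, heC⟩ := hsurj (l4, l6)
    (by rw [hDdef]; exact Finset.mem_union_left _ (Finset.mem_product.mpr (by simp)))
  rw [Prod.mk.injEq] at heC
  obtain ⟨hC1, hC2⟩ := heC
  have hC3 : prt l3 kC = l5 := by
    obtain ⟨f1, f2, f3, f4⟩ := forced kC hkC l3 hl3 ne31 ne32
      (by rw [hC1]; exact Ne.symm ne43) (by rw [hC2]; exact Ne.symm ne63)
    rcases hLenum (prt l3 kC) (prtL l3 hl3 kC hkC) with h | h | h | h | h | h
    · exact absurd h f1
    · exact absurd h f2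
    · exact absurd h (prt_ne l3 hl3 kC hkC)
    · exact absurd (h.trans hC1.symm) f3
    · exact h
    · exact absurd (h.trans hC2.symm) f4
  obtain ⟨kD, hkD, heD⟩ := hsurj (l5, l4)
    (by rw [hDdef]; exact Finset.mem_union_right _ (Finset.mem_product.mpr (by simp)))
  rw [Prod.mk.injEq] at heD
  obtain ⟨hD1, hD2⟩ := heD
  have hD3 : prt l3 kD = l6 := by
    obtain ⟨f1, f2, f3, f4⟩ := forced kD hkD l3 hl3 ne31 ne32
      (by rw [hD1]; exact Ne.symm ne53) (by rw [hD2]; exact Ne.symm ne43)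
    rcases hLenum (prt l3 kD) (prtL l3 hl3 kD hkD) with h | h | h | h | h | h
    · exact absurd h f1
    · exact absurd h f2
    · exact absurd h (prt_ne l3 hl3 kD hkD)
    · exact absurd (h.trans hD2.symm) f4
    · exact absurd (h.trans hD1.symm) f3
    · exact h
  have E1 := hE kA hkA l3 hl3 l5 hl5 l4 hl4 l6 hl6 hA1 hA2 hA3
  have E3 := hE kB hkB l4 hl4 l5 hl5 l3 hl3 l6 hl6 hB1 hB2 hB3
  have E4 := hE kC hkC l4 hl4 l6 hl6 l3 hl3 l5 hl5 hC1 hC2 hC3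
  have E6 := hE kD hkD l5 hl5 l4 hl4 l3 hl3 l6 hl6 hD1 hD2 hD3
  have hKey := St14X.keyIdentity (row l1) (row l2) (row l3) (row l4) (row l5) (row l6)
  rw [E1, E3, E4, E6] at hKey
  have hzero2 : St14X.d3 (row l1) (row l3) (row l6) = 0 ∨
      St14X.d3 (row l2) (row l4) (row l5) = 0 := by
    have h0 : (2 : ℂ) * St14X.d3 (row l1) (row l3) (row l6)
        * St14X.d3 (row l2) (row l4) (row l5) = 0 := by linear_combination -hKey
    rcases mul_eq_zero.mp h0 with h | h
    · rcases mul_eq_zero.mp h with h' | h'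
      · exact absurd h' two_ne_zero
      · exact Or.inl h'
    · exact Or.inr h
  rcases hzero2 with h | h
  · have hw : St14X.cr (row l3) (row l6) ≠ 0 :=
      hcrne l3 (hLA l3 hl3) l6 (hLA l6 hl6) (Ne.symm ne63)
    have hq3 : Projectivization.mk ℂ (St14X.cr (row l3) (row l6)) hw ∈ l3 :=
      St14X.mk_mem (cv l3) (hcv l3 (hLA l3 hl3)).2 _ _ (St14X.dt_cr_left _ _)
    have hq6 : Projectivization.mk ℂ (St14X.cr (row l3) (row l6)) hw ∈ l6 :=
      St14X.mk_mem (cv l6) (hcv l6 (hLA l6 hl6)).2 _ _ (St14X.dt_cr_right _ _)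
    have hq1 : Projectivization.mk ℂ (St14X.cr (row l3) (row l6)) hw ∈ l1 :=
      St14X.mk_mem (cv l1) (hcv l1 (hLA l1 hl1)).2 _ _ h
    exact no3 l1 hl1 l3 hl3 l6 hl6 (Ne.symm ne31) (Ne.symm ne61) (Ne.symm ne63) _ hq1 hq3 hq6
  · have hw : St14X.cr (row l4) (row l5) ≠ 0 :=
      hcrne l4 (hLA l4 hl4) l5 (hLA l5 hl5) (Ne.symm ne54)
    have hq4 : Projectivization.mk ℂ (St14X.cr (row l4) (row l5)) hw ∈ l4 :=
      St14X.mk_mem (cv l4) (hcv l4 (hLA l4 hl4)).2 _ _ (St14X.dt_cr_left _ _)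
    have hq5 : Projectivization.mk ℂ (St14X.cr (row l4) (row l5)) hw ∈ l5 :=
      St14X.mk_mem (cv l5) (hcv l5 (hLA l5 hl5)).2 _ _ (St14X.dt_cr_right _ _)
    have hq2 : Projectivization.mk ℂ (St14X.cr (row l4) (row l5)) hw ∈ l2 :=
      St14X.mk_mem (cv l2) (hcv l2 (hLA l2 hl2)).2 _ _ h
    exact no3 l2 hl2 l4 hl4 l5 hl5 (Ne.symm ne42) (Ne.symm ne52) (Ne.symm ne54) _ hq2 hq4 hq5
end
end
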